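/- arXiv:math/0611141 — 6 statements merged into one kernel-verified Lean document; each statement's English description precedes it below -/
import Mathlib

section
/- Suppose the walk is transient in the sense that ∫_0^∞ P_t(0) dt < ∞. Then for every integer m ≥ 3, ∫_0^∞ t · (Σ_{i∈ℤ^d} P_t(i)^m) dt < ∞. (This expresses the strong transience of the differences random walk of m ≥ 3 independent copies of a symmetric transient random walk.) -/
open scoped BigOperators

/-- The `n`-fold convolution power of a step distribution `p` on `ℤ^d`. -/
noncomputable def convPow {d : ℕ} (p : (Fin d → ℤ) → ℝ) : ℕ → (Fin d → ℤ) → ℝ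
  | 0 => fun i => if i = 0 then 1 else 0
  | n + 1 => fun i => ∑' j : Fin d → ℤ, p j * convPow p n (i - j)

/-- The Poissonized (rate-1 continuous-time) transition kernel
`P_t(i) = ∑_{n} e^{-t} t^n/n! p^{*n}(i)`. -/
noncomputable def Pker {d : ℕ} (p : (Fin d → ℤ) → ℝ) (t : ℝ) (i : Fin d → ℤ) : ℝ :=
  ∑' n : ℕ, Real.exp (-t) * (t ^ n / (n.factorial : ℝ)) * convPow p n i


open MeasureTheory

/-!
With `q = ofReal ∘ p`, work with `H_t = ∑ₙ Po(t){n} q^{*n}` in `ℝ≥0∞`. As Poisson laws convolve,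
`H_{s+t} = H_s ⋆ H_t`; by symmetry `∑ᵢ H_t(i)² = H_{2t}(0)`, so Cauchy–Schwarz gives
`H_{s+t}(i)² ≤ H_{2s}(0) H_{2t}(0)`. As `∑ᵢ H_t(i) = 1` and `H ≤ 1`, for `m ≥ 3` and every
`s ∈ (0, t)` this yields `∑ᵢ H_t(i)^m ≤ ∑ᵢ H_t(i) H_t(i)² ≤ φ(s) φ(t - s)` with `φ(s) = H_{2s}(0)`.
Averaging over `s` bounds `t ∑ᵢ H_t(i)^m` by `(φ ⋆ φ)(t)`, whose integral over `(0, ∞)` is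
`(∫ φ)² = (½ ∫₀^∞ H_u(0) du)² < ∞`.
-/

open ProbabilityTheory Set
open scoped ENNReal NNReal

namespace MeasureTheory

variable {G : Type*} [MeasurableSpace G] [AddGroup G] [MeasurableAdd₂ G] [MeasurableNeg G]
  {μ : Measure G} [SFinite μ] [μ.IsAddLeftInvariant]

theorem lintegral_lconvolution {f g : G → ℝ≥0∞} (hf : Measurable f) (hg : Measurable g) :
    ∫⁻ x, (f ⋆ₗ[μ] g) x ∂μ = (∫⁻ x, f x ∂μ) * ∫⁻ x, g x ∂μ := by
  simp only [lconvolution_def]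
  rw [lintegral_lintegral_swap (by fun_prop), ← lintegral_mul_const _ hf]
  refine lintegral_congr fun y => ?_
  rw [lintegral_const_mul _ (by fun_prop), lintegral_add_left_eq_self]

end MeasureTheory

theorem ENNReal.tsum_mul_sq_le_sq_mul_sq {α : Type*} (f g : α → ℝ≥0∞) :
    (∑' i, f i * g i) ^ 2 ≤ (∑' i, f i ^ 2) * ∑' i, g i ^ 2 := by
  let _ : MeasurableSpace α := ⊤
  have h_holder := ENNReal.lintegral_mul_le_Lp_mul_Lq Measure.count Real.HolderConjugate.two_two
    (f := f) (g := g) measurable_from_top.aemeasurable measurable_from_top.aemeasurable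
  simp only [Pi.mul_apply, lintegral_count' measurable_from_top, ENNReal.rpow_two] at h_holder
  calc (∑' i, f i * g i) ^ 2
      ≤ ((∑' i, f i ^ 2) ^ (1 / 2 : ℝ) * (∑' i, g i ^ 2) ^ (1 / 2 : ℝ)) ^ 2 := by gcongr
    _ = (∑' i, f i ^ 2) * ∑' i, g i ^ 2 := by
        rw [mul_pow, ← ENNReal.rpow_natCast, ← ENNReal.rpow_natCast, ← ENNReal.rpow_mul,
          ← ENNReal.rpow_mul]
        norm_num

theorem lintegral_Ioi_comp_mul_left (f : ℝ → ℝ≥0∞) {c : ℝ} (hc : 0 < c) :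
    ENNReal.ofReal c * ∫⁻ x in Ioi 0, f (c * x) = ∫⁻ x in Ioi 0, f x := by
  have h := lintegral_image_eq_lintegral_abs_deriv_mul (measurableSet_Ioi (a := 0))
    (f := (c * ·)) (f' := fun _ => c)
    (fun x _ => by simpa using ((hasDerivAt_id' x).const_mul c).hasDerivWithinAt)
    (mul_right_injective₀ hc.ne').injOn f
  rw [image_mul_left_Ioi hc, mul_zero, abs_of_pos hc,
    lintegral_const_mul' _ _ ENNReal.ofReal_ne_top] at h
  exact h.symm

theorem lintegral_Ioi_mul_le_sq {X φ : ℝ → ℝ≥0∞} (hφ : Measurable φ)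
    (hX : ∀ s t, 0 < s → s < t → X t ≤ φ s * φ (t - s)) :
    ∫⁻ t in Ioi 0, ENNReal.ofReal t * X t ≤ (∫⁻ s in Ioi 0, φ s) ^ 2 := by
  set ψ := (Ioi (0 : ℝ)).indicator φ
  have hψ : Measurable ψ := hφ.indicator measurableSet_Ioi
  have h_pointwise : ∀ t ∈ Ioi (0 : ℝ), ENNReal.ofReal t * X t ≤ (ψ ⋆ₗ ψ) t := by
    intro t ht
    calc ENNReal.ofReal t * X t = ∫⁻ _ in Ioo 0 t, X t := by
          rw [setLIntegral_const, Real.volume_Ioo, sub_zero, mul_comm]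
      _ ≤ ∫⁻ s in Ioo 0 t, ψ s * ψ (-s + t) := by
          refine setLIntegral_mono' measurableSet_Ioo fun s hs => ?_
          have hts : 0 < t - s := sub_pos.2 hs.2
          simp only [ψ, neg_add_eq_sub, indicator_of_mem (mem_Ioi.2 hs.1),
            indicator_of_mem (mem_Ioi.2 hts)]
          exact hX s t hs.1 hs.2
      _ ≤ (ψ ⋆ₗ ψ) t := setLIntegral_le_lintegral _ _
  calc ∫⁻ t in Ioi 0, ENNReal.ofReal t * X t
      ≤ ∫⁻ t in Ioi 0, (ψ ⋆ₗ ψ) t := setLIntegral_mono' measurableSet_Ioi h_pointwise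
    _ ≤ ∫⁻ t, (ψ ⋆ₗ ψ) t := setLIntegral_le_lintegral _ _
    _ = (∫⁻ s in Ioi 0, φ s) ^ 2 := by
        rw [lintegral_lconvolution hψ hψ, lintegral_indicator measurableSet_Ioi, sq]

namespace LatticeWalk

open Measure

variable {Λ : Type*} [AddCommGroup Λ] [MeasurableSpace Λ]

theorem lconvolution_neg [DiscreteMeasurableSpace Λ] {f g : Λ → ℝ≥0∞} (hf : ∀ x, f (-x) = f x)
    (hg : ∀ x, g (-x) = g x) (x : Λ) : (f ⋆ₗ[count] g) (-x) = (f ⋆ₗ[count] g) x := by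
  simp only [lconvolution_def]
  rw [← lintegral_neg_eq_self]
  refine lintegral_congr fun y => ?_
  rw [hf, ← hg]
  congr 2
  abel

variable [DecidableEq Λ] (q : Λ → ℝ≥0∞)

noncomputable def lconvPow : ℕ → Λ → ℝ≥0∞
  | 0 => Pi.single 0 1
  | n + 1 => q ⋆ₗ[count] lconvPow n

noncomputable def heatKernel (t : ℝ≥0) (x : Λ) : ℝ≥0∞ :=
  ∫⁻ n, lconvPow q n x ∂poissonMeasure t

theorem heatKernel_eq_tsum (t : ℝ≥0) (x : Λ) :
    heatKernel q t x =
      ∑' n, ENNReal.ofReal (Real.exp (-t) * t ^ n / n.factorial) * lconvPow q n x := by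
  simp only [heatKernel, lintegral_countable', poissonMeasure_singleton, mul_comm]

theorem measurable_heatKernel (x : Λ) : Measurable fun t : ℝ≥0 => heatKernel q t x := by
  simp only [heatKernel_eq_tsum]
  fun_prop

variable [DiscreteMeasurableSpace Λ]

theorem lconvPow_neg (hq_symm : ∀ x, q (-x) = q x) (n : ℕ) (x : Λ) :
    lconvPow q n (-x) = lconvPow q n x := by
  induction n generalizing x with
  | zero => simp [lconvPow, Pi.single_apply]
  | succ n ih => exact lconvolution_neg hq_symm ih x

theorem heatKernel_neg (hq_symm : ∀ x, q (-x) = q x) (t : ℝ≥0) (x : Λ) :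
    heatKernel q t (-x) = heatKernel q t x := by
  simp only [heatKernel, lconvPow_neg q hq_symm]

variable [Countable Λ]

theorem single_lconvolution (f : Λ → ℝ≥0∞) : Pi.single 0 1 ⋆ₗ[count] f = f := by
  ext x
  rw [lconvolution_def, lintegral_count, tsum_eq_single 0 fun y hy => by simp [hy]]
  simp

theorem lconvPow_add (m n : ℕ) :
    lconvPow q (m + n) = lconvPow q m ⋆ₗ[count] lconvPow q n := by
  induction m with
  | zero => rw [zero_add, lconvPow, single_lconvolution]
  | succ m ih =>
    rw [add_right_comm, lconvPow, lconvPow, ih, lconvolution_assoc .of_discrete .of_discrete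
      .of_discrete]

theorem tsum_lconvPow (hq_sum : ∑' x, q x = 1) (n : ℕ) : ∑' x, lconvPow q n x = 1 := by
  rw [← lintegral_count] at hq_sum ⊢
  induction n with
  | zero => simp [lconvPow, lintegral_count]
  | succ n ih =>
    rw [lconvPow, lintegral_lconvolution .of_discrete .of_discrete, hq_sum, ih, one_mul]

theorem heatKernel_add (s t : ℝ≥0) :
    heatKernel q (s + t) = heatKernel q s ⋆ₗ[count] heatKernel q t := by
  ext x
  calc heatKernel q (s + t) x
      = ∫⁻ a, ∫⁻ b, lconvPow q (a + b) x ∂poissonMeasure t ∂poissonMeasure s := by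
        rw [heatKernel, ← poissonMeasure_conv_poissonMeasure, lintegral_conv .of_discrete]
    _ = ∫⁻ a, ∫⁻ y, ∫⁻ b, lconvPow q a y * lconvPow q b (-y + x)
          ∂poissonMeasure t ∂count ∂poissonMeasure s := by
        simp only [lconvPow_add, lconvolution_def]
        exact lintegral_congr fun a => lintegral_lintegral_swap .of_discrete
    _ = ∫⁻ y, ∫⁻ a, ∫⁻ b, lconvPow q a y * lconvPow q b (-y + x)
          ∂poissonMeasure t ∂poissonMeasure s ∂count := lintegral_lintegral_swap .of_discrete
    _ = (heatKernel q s ⋆ₗ[count] heatKernel q t) x := by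
        simp only [lconvolution_def, heatKernel, lintegral_const_mul _ Measurable.of_discrete,
          lintegral_mul_const _ Measurable.of_discrete]

theorem tsum_heatKernel (hq_sum : ∑' x, q x = 1) (t : ℝ≥0) : ∑' x, heatKernel q t x = 1 := by
  rw [← lintegral_count]
  unfold heatKernel
  rw [lintegral_lintegral_swap .of_discrete]
  simp [lintegral_count, tsum_lconvPow q hq_sum]

theorem lconvPow_ne_top (hq_sum : ∑' x, q x = 1) (n : ℕ) (x : Λ) : lconvPow q n x ≠ ⊤ :=
  ne_top_of_le_ne_top ENNReal.one_ne_top (tsum_lconvPow q hq_sum n ▸ ENNReal.le_tsum x)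

theorem heatKernel_le_one (hq_sum : ∑' x, q x = 1) (t : ℝ≥0) (x : Λ) : heatKernel q t x ≤ 1 :=
  tsum_heatKernel q hq_sum t ▸ ENNReal.le_tsum x

theorem heatKernel_ne_top (hq_sum : ∑' x, q x = 1) (t : ℝ≥0) (x : Λ) : heatKernel q t x ≠ ⊤ :=
  ne_top_of_le_ne_top ENNReal.one_ne_top (heatKernel_le_one q hq_sum t x)

theorem tsum_heatKernel_sq (hq_symm : ∀ x, q (-x) = q x) (t : ℝ≥0) :
    ∑' x, heatKernel q t x ^ 2 = heatKernel q (2 * t) 0 := by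
  rw [two_mul, heatKernel_add, lconvolution_def, lintegral_count]
  simp_rw [add_zero, heatKernel_neg q hq_symm, sq]

theorem heatKernel_add_sq_le (hq_symm : ∀ x, q (-x) = q x) (s t : ℝ≥0) (x : Λ) :
    heatKernel q (s + t) x ^ 2 ≤ heatKernel q (2 * s) 0 * heatKernel q (2 * t) 0 := by
  have h_shift : ∑' y, heatKernel q t (-y + x) ^ 2 = ∑' y, heatKernel q t y ^ 2 := by
    simpa only [neg_add_eq_sub, Equiv.subLeft_apply] using
      (Equiv.subLeft x).tsum_eq fun y => heatKernel q t y ^ 2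
  rw [heatKernel_add, lconvolution_def, lintegral_count, ← tsum_heatKernel_sq q hq_symm,
    ← tsum_heatKernel_sq q hq_symm, ← h_shift]
  exact ENNReal.tsum_mul_sq_le_sq_mul_sq _ _

theorem tsum_heatKernel_add_pow_le (hq_sum : ∑' x, q x = 1) (hq_symm : ∀ x, q (-x) = q x) {m : ℕ}
    (hm : 3 ≤ m) (s t : ℝ≥0) :
    ∑' x, heatKernel q (s + t) x ^ m ≤ heatKernel q (2 * s) 0 * heatKernel q (2 * t) 0 := by
  set M := heatKernel q (2 * s) 0 * heatKernel q (2 * t) 0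
  calc ∑' x, heatKernel q (s + t) x ^ m
      ≤ ∑' x, heatKernel q (s + t) x * heatKernel q (s + t) x ^ 2 :=
        ENNReal.tsum_le_tsum fun x => by
          rw [← pow_succ']
          exact pow_le_pow_of_le_one zero_le (heatKernel_le_one q hq_sum _ x) hm
    _ ≤ ∑' x, heatKernel q (s + t) x * M :=
        ENNReal.tsum_le_tsum fun x => by gcongr; exact heatKernel_add_sq_le q hq_symm s t x
    _ = M := by rw [ENNReal.tsum_mul_right, tsum_heatKernel q hq_sum, one_mul]

theorem tsum_heatKernel_toNNReal_pow_le (hq_sum : ∑' x, q x = 1) (hq_symm : ∀ x, q (-x) = q x)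
    {m : ℕ} (hm : 3 ≤ m) {s t : ℝ} (hs : 0 ≤ s) (hst : s ≤ t) :
    ∑' x, heatKernel q t.toNNReal x ^ m ≤
      heatKernel q (2 * s).toNNReal 0 * heatKernel q (2 * (t - s)).toNNReal 0 := by
  have ht : t.toNNReal = s.toNNReal + (t - s).toNNReal := by
    rw [← Real.toNNReal_add hs (sub_nonneg.2 hst), add_sub_cancel]
  rw [ht, Real.toNNReal_mul zero_le_two, Real.toNNReal_mul zero_le_two, Real.toNNReal_ofNat]
  exact tsum_heatKernel_add_pow_le q hq_sum hq_symm hm _ _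

end LatticeWalk

open LatticeWalk

section Conversion

variable {d : ℕ} {p : (Fin d → ℤ) → ℝ} (hp : ∀ i, 0 ≤ p i)
  (hq_sum : ∑' i, ENNReal.ofReal (p i) = 1)
include hp hq_sum

theorem convPow_eq_toReal (n : ℕ) (i : Fin d → ℤ) :
    convPow p n i = (lconvPow (fun j => ENNReal.ofReal (p j)) n i).toReal := by
  induction n generalizing i with
  | zero => by_cases hi : i = 0 <;> simp [convPow, lconvPow, hi]
  | succ n ih =>
    rw [convPow, lconvPow, lconvolution_def, lintegral_count, ENNReal.tsum_toReal_eq fun j =>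
      ENNReal.mul_ne_top ENNReal.ofReal_ne_top (lconvPow_ne_top _ hq_sum n _)]
    refine tsum_congr fun j => ?_
    rw [ENNReal.toReal_mul, ENNReal.toReal_ofReal (hp j), ih, neg_add_eq_sub]

theorem Pker_eq_toReal {t : ℝ} (ht : 0 ≤ t) (i : Fin d → ℤ) :
    Pker p t i = (heatKernel (fun j => ENNReal.ofReal (p j)) t.toNNReal i).toReal := by
  rw [Pker, heatKernel_eq_tsum, ENNReal.tsum_toReal_eq fun n =>
    ENNReal.mul_ne_top ENNReal.ofReal_ne_top (lconvPow_ne_top _ hq_sum n _)]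
  refine tsum_congr fun n => ?_
  rw [ENNReal.toReal_mul, ENNReal.toReal_ofReal (by positivity), convPow_eq_toReal hp hq_sum,
    Real.coe_toNNReal t ht, mul_div_assoc]

theorem ofReal_Pker {t : ℝ} (ht : 0 ≤ t) (i : Fin d → ℤ) :
    ENNReal.ofReal (Pker p t i) = heatKernel (fun j => ENNReal.ofReal (p j)) t.toNNReal i := by
  rw [Pker_eq_toReal hp hq_sum ht, ENNReal.ofReal_toReal (heatKernel_ne_top _ hq_sum _ i)]

theorem ofReal_mul_tsum_Pker_pow_le {t : ℝ} (ht : 0 ≤ t) (m : ℕ) :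
    ENNReal.ofReal (t * ∑' i, Pker p t i ^ m) ≤
      ENNReal.ofReal t * ∑' i, heatKernel (fun j => ENNReal.ofReal (p j)) t.toNNReal i ^ m := by
  have h_ne_top : ∀ i, heatKernel (fun j => ENNReal.ofReal (p j)) t.toNNReal i ^ m ≠ ⊤ :=
    fun i => ENNReal.pow_ne_top (heatKernel_ne_top _ hq_sum _ i)
  simp only [Pker_eq_toReal hp hq_sum ht, ← ENNReal.toReal_pow, ← ENNReal.tsum_toReal_eq h_ne_top]
  rw [ENNReal.ofReal_mul ht]
  gcongr
  exact ENNReal.ofReal_toReal_le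

end Conversion

theorem strongly_transient_of_transient_general {d : ℕ} (p : (Fin d → ℤ) → ℝ)
    (hp_nonneg : ∀ i, 0 ≤ p i) (hp_sum : ∑' i, p i = 1)
    (hp_symm : ∀ i, p (-i) = p i)
    (htrans : ∫⁻ t in Set.Ioi (0 : ℝ), ENNReal.ofReal (Pker p t 0) < ⊤) :
    ∀ m : ℕ, 3 ≤ m →
      ∫⁻ t in Set.Ioi (0 : ℝ),
        ENNReal.ofReal (t * ∑' i : Fin d → ℤ, (Pker p t i) ^ m) < ⊤ := by
  intro m hm
  set q : (Fin d → ℤ) → ℝ≥0∞ := fun i => ENNReal.ofReal (p i)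
  have hp_summable : Summable p := by
    by_contra h
    simp [tsum_eq_zero_of_not_summable h] at hp_sum
  have hq_sum : ∑' i, q i = 1 := by
    rw [← ENNReal.ofReal_tsum_of_nonneg hp_nonneg hp_summable, hp_sum, ENNReal.ofReal_one]
  have hq_symm : ∀ i, q (-i) = q i := fun i => by simp only [q, hp_symm]
  set ψ : ℝ → ℝ≥0∞ := fun t => heatKernel q t.toNNReal 0
  have hψ : Measurable ψ := (measurable_heatKernel q 0).comp measurable_real_toNNReal
  have hψ_int : ∫⁻ t in Ioi 0, ψ t < ⊤ := by
    refine lt_of_eq_of_lt (setLIntegral_congr_fun measurableSet_Ioi fun t ht => ?_) htrans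
    exact (ofReal_Pker hp_nonneg hq_sum (le_of_lt ht) 0).symm
  have hψ_two_int : ∫⁻ s in Ioi 0, ψ (2 * s) < ⊤ := by
    rw [← lintegral_Ioi_comp_mul_left ψ two_pos] at hψ_int
    exact ENNReal.lt_top_of_mul_ne_top_right hψ_int.ne (by norm_num)
  calc ∫⁻ t in Ioi 0, ENNReal.ofReal (t * ∑' i, Pker p t i ^ m)
      ≤ ∫⁻ t in Ioi 0, ENNReal.ofReal t * ∑' i, heatKernel q t.toNNReal i ^ m :=
        setLIntegral_mono' measurableSet_Ioi fun t ht =>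
          ofReal_mul_tsum_Pker_pow_le hp_nonneg hq_sum (le_of_lt ht) m
    _ ≤ (∫⁻ s in Ioi 0, ψ (2 * s)) ^ 2 :=
        lintegral_Ioi_mul_le_sq (hψ.comp (measurable_const_mul 2)) fun s t hs hst =>
          tsum_heatKernel_toNNReal_pow_le q hq_sum hq_symm hm hs.le hst.le
    _ < ⊤ := ENNReal.pow_lt_top hψ_two_int

/-- Strong transience of the differences random walk of `m ≥ 3` independent copies
of a symmetric transient random walk: if `∫_0^∞ P_t(0) dt < ∞`, then
`∫_0^∞ t ∑_i P_t(i)^m dt < ∞` for every `m ≥ 3`. -/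
theorem strongly_transient_of_transient {d : ℕ} (hd : 1 ≤ d) (p : (Fin d → ℤ) → ℝ)
    (hp_nonneg : ∀ i, 0 ≤ p i) (hp_sum : ∑' i, p i = 1)
    (hp_symm : ∀ i, p (-i) = p i)
    (htrans : ∫⁻ t in Set.Ioi (0 : ℝ), ENNReal.ofReal (Pker p t 0) < ⊤) :
    ∀ m : ℕ, 3 ≤ m →
      ∫⁻ t in Set.Ioi (0 : ℝ),
        ENNReal.ofReal (t * ∑' i : Fin d → ℤ, (Pker p t i) ^ m) < ⊤ :=
  strongly_transient_of_transient_general p hp_nonneg hp_sum hp_symm htrans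
end

section
/- Let f : [0,∞) → [0,∞) be nonincreasing (hence measurable) and let k be a positive integer. Then ∫_0^∞ t · f(t)^k · f(2t) dt ≤ (1/2) · (∫_0^∞ f(t)^k dt) · (∫_0^∞ f(s) ds), where all integrals are taken in [0,∞] (Lebesgue integrals of nonnegative functions). -/
/-!
For a nonincreasing `f ≥ 0` and `t > 0`, comparing `f` on `(0, 2t]` with its value at the right
endpoint gives `2t · f(2t) ≤ ∫_0^∞ f`. Hence `t · f(2t) ≤ (1/2) ∫_0^∞ f` pointwise, and integrating
against `f(t)^k` (or any other nonnegative weight) yields the bound.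
-/

open MeasureTheory Set
open scoped ENNReal

theorem AntitoneOn.ofReal_sub_mul_le_setLIntegral_Ioi {f : ℝ → ℝ≥0∞} {a b : ℝ}
    (hf : AntitoneOn f (Ioi a)) (hab : a < b) :
    ENNReal.ofReal (b - a) * f b ≤ ∫⁻ s in Ioi a, f s :=
  calc ENNReal.ofReal (b - a) * f b = ∫⁻ _ in Ioc a b, f b := by
        rw [setLIntegral_const, Real.volume_Ioc, mul_comm]
    _ ≤ ∫⁻ s in Ioc a b, f s :=
        setLIntegral_mono' measurableSet_Ioc fun s hs => hf hs.1 hab hs.2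
    _ ≤ ∫⁻ s in Ioi a, f s := lintegral_mono_set Ioc_subset_Ioi_self

theorem AntitoneOn.ofReal_mul_comp_two_mul_le {f : ℝ → ℝ≥0∞} (hf : AntitoneOn f (Ioi 0))
    {t : ℝ} (ht : 0 < t) :
    ENNReal.ofReal t * f (2 * t) ≤ (1 / 2) * ∫⁻ s in Ioi 0, f s := by
  have h := hf.ofReal_sub_mul_le_setLIntegral_Ioi (by positivity : (0 : ℝ) < 2 * t)
  rw [sub_zero, ENNReal.ofReal_mul zero_le_two, ENNReal.ofReal_ofNat, mul_assoc] at h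
  rwa [one_div, ← ENNReal.div_eq_inv_mul, ENNReal.le_div_iff_mul_le (by simp) (by simp),
    mul_comm]

theorem AntitoneOn.setLIntegral_Ioi_ofReal_mul_mul_comp_two_mul_le {f g : ℝ → ℝ≥0∞}
    (hf : AntitoneOn f (Ioi 0)) (hg : AEMeasurable g (volume.restrict (Ioi 0))) :
    ∫⁻ t in Ioi (0 : ℝ), ENNReal.ofReal t * g t * f (2 * t)
      ≤ (1 / 2) * (∫⁻ t in Ioi (0 : ℝ), g t) * ∫⁻ s in Ioi (0 : ℝ), f s :=
  calc ∫⁻ t in Ioi (0 : ℝ), ENNReal.ofReal t * g t * f (2 * t)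
      ≤ ∫⁻ t in Ioi (0 : ℝ), g t * ((1 / 2) * ∫⁻ s in Ioi 0, f s) :=
        setLIntegral_mono' measurableSet_Ioi fun t ht => by
          rw [mul_right_comm, mul_comm]
          exact mul_le_mul_right (hf.ofReal_mul_comp_two_mul_le ht) _
    _ = (∫⁻ t in Ioi (0 : ℝ), g t) * ((1 / 2) * ∫⁻ s in Ioi 0, f s) :=
        lintegral_mul_const'' _ hg
    _ = (1 / 2) * (∫⁻ t in Ioi (0 : ℝ), g t) * ∫⁻ s in Ioi (0 : ℝ), f s := by ring

theorem lintegral_mul_antitone_bound_general (f : ℝ → ℝ≥0∞)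
    (hf : AntitoneOn f (Set.Ici (0 : ℝ))) (k : ℕ) :
    ∫⁻ t in Set.Ioi (0 : ℝ), ENNReal.ofReal t * (f t) ^ k * f (2 * t)
      ≤ (1 / 2) * (∫⁻ t in Set.Ioi (0 : ℝ), (f t) ^ k) *
          ∫⁻ s in Set.Ioi (0 : ℝ), f s := by
  have hf' : AntitoneOn f (Ioi 0) := hf.mono Ioi_subset_Ici_self
  exact hf'.setLIntegral_Ioi_ofReal_mul_mul_comp_two_mul_le
    ((aemeasurable_restrict_of_antitoneOn measurableSet_Ioi hf').pow_const k)

/-- If `f : [0,∞) → [0,∞]` is nonincreasing and `k ≥ 1`, then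
`∫_0^∞ t f(t)^k f(2t) dt ≤ (1/2) (∫_0^∞ f(t)^k dt) (∫_0^∞ f(s) ds)`,
all integrals taken in `[0,∞]`. -/
theorem lintegral_mul_antitone_bound (f : ℝ → ℝ≥0∞)
    (hf : AntitoneOn f (Set.Ici (0 : ℝ))) (k : ℕ) (hk : 1 ≤ k) :
    ∫⁻ t in Set.Ioi (0 : ℝ), ENNReal.ofReal t * (f t) ^ k * f (2 * t)
      ≤ (1 / 2) * (∫⁻ t in Set.Ioi (0 : ℝ), (f t) ^ k) *
          ∫⁻ s in Set.Ioi (0 : ℝ), f s :=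
  lintegral_mul_antitone_bound_general f hf k
end

section
/- Let H be a real Hilbert space and let a : H → H be a bounded self-adjoint linear operator with operator norm ‖a‖ ≤ 1. If μ ∈ H is such that the series Σ_{n=0}^∞ ⟨μ, aⁿμ⟩ converges to a real number L (i.e. the partial sums converge), then L ≥ 0. (This yields the positivity of the quadratic form of the Green operator G = Σ_{n≥0} aⁿ of a symmetric transition kernel.) -/
open Filter

open scoped InnerProductSpace

/-!
Group the series in consecutive pairs. With `v = aᵏ μ`, self-adjointness gives
`⟪μ, a²ᵏ μ⟫ + ⟪μ, a²ᵏ⁺¹ μ⟫ = ‖v‖² + ⟪v, a v⟫`, which is nonnegative by Cauchy–Schwarz since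
`‖a v‖ ≤ ‖v‖`. Hence every even partial sum is nonnegative, and so is their limit `L`.
-/

theorem Finset.sum_range_two_mul_nonneg {M : Type*} [AddCommMonoid M] [PartialOrder M]
    [IsOrderedAddMonoid M] {f : ℕ → M} (hf : ∀ k, 0 ≤ f (2 * k) + f (2 * k + 1)) (N : ℕ) :
    0 ≤ ∑ n ∈ Finset.range (2 * N), f n := by
  induction N with
  | zero => simp
  | succ N ih =>
    rw [Nat.mul_succ, Finset.sum_range_succ, Finset.sum_range_succ, add_assoc]
    exact add_nonneg ih (hf N)

theorem real_inner_self_add_inner_nonneg_of_norm_le {E : Type*} [NormedAddCommGroup E]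
    [InnerProductSpace ℝ E] {v w : E} (h : ‖w‖ ≤ ‖v‖) : 0 ≤ ⟪v, v⟫_ℝ + ⟪v, w⟫_ℝ := by
  have hvw : |⟪v, w⟫_ℝ| ≤ ‖v‖ * ‖v‖ :=
    (abs_real_inner_le_norm v w).trans (mul_le_mul_of_nonneg_left h (norm_nonneg v))
  rw [real_inner_self_eq_norm_mul_norm]
  linarith [neg_abs_le ⟪v, w⟫_ℝ]

theorem ContinuousLinearMap.inner_pow_add_apply {𝕜 E : Type*} [RCLike 𝕜]
    [NormedAddCommGroup E] [InnerProductSpace 𝕜 E] {T : E →L[𝕜] E}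
    (hT : (T : E →ₗ[𝕜] E).IsSymmetric) (m n : ℕ) (x y : E) :
    ⟪x, (T ^ (m + n)) y⟫_𝕜 = ⟪(T ^ m) x, (T ^ n) y⟫_𝕜 := by
  have hTm := hT.pow m
  rw [← toLinearMap_pow] at hTm
  rw [pow_add, mul_apply_eq_comp, ← coe_coe (T ^ m), hTm]

theorem ContinuousLinearMap.inner_pow_two_mul_add_inner_pow_two_mul_add_one_nonneg
    {E : Type*} [NormedAddCommGroup E] [InnerProductSpace ℝ E] {T : E →L[ℝ] E}
    (hT : (T : E →ₗ[ℝ] E).IsSymmetric) (hT₁ : ‖T‖ ≤ 1) (x : E) (k : ℕ) :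
    0 ≤ ⟪x, (T ^ (2 * k)) x⟫_ℝ + ⟪x, (T ^ (2 * k + 1)) x⟫_ℝ := by
  have hcontr : ‖(T ^ (k + 1)) x‖ ≤ ‖(T ^ k) x‖ := by
    rw [pow_succ', mul_apply_eq_comp]
    simpa using T.le_of_opNorm_le hT₁ ((T ^ k) x)
  rw [two_mul, add_assoc, T.inner_pow_add_apply hT, T.inner_pow_add_apply hT]
  exact real_inner_self_add_inner_nonneg_of_norm_le hcontr

theorem green_quadratic_form_nonneg_general {H : Type*} [NormedAddCommGroup H]
    [InnerProductSpace ℝ H]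
    (a : H →L[ℝ] H) (ha : ∀ x y : H, (inner ℝ (a x) y : ℝ) = inner ℝ x (a y))
    (hnorm : ‖a‖ ≤ 1) (μ : H) (L : ℝ)
    (hL : Tendsto (fun N : ℕ => ∑ n ∈ Finset.range N, (inner ℝ μ ((a ^ n) μ) : ℝ))
      atTop (nhds L)) :
    0 ≤ L := by
  have hpairs := a.inner_pow_two_mul_add_inner_pow_two_mul_add_one_nonneg ha hnorm μ
  exact ge_of_tendsto (hL.comp (tendsto_id.const_mul_atTop' two_pos))
    (Eventually.of_forall (Finset.sum_range_two_mul_nonneg hpairs))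

/-- If `a` is a bounded self-adjoint operator on a real Hilbert space with
`‖a‖ ≤ 1` and the series `∑_n ⟨μ, aⁿμ⟩` converges to `L`, then `L ≥ 0`. -/
theorem green_quadratic_form_nonneg {H : Type*} [NormedAddCommGroup H]
    [InnerProductSpace ℝ H] [CompleteSpace H]
    (a : H →L[ℝ] H) (ha : ∀ x y : H, (inner ℝ (a x) y : ℝ) = inner ℝ x (a y))
    (hnorm : ‖a‖ ≤ 1) (μ : H) (L : ℝ)
    (hL : Tendsto (fun N : ℕ => ∑ n ∈ Finset.range N, (inner ℝ μ ((a ^ n) μ) : ℝ))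
      atTop (nhds L)) :
    0 ≤ L :=
  green_quadratic_form_nonneg_general a ha hnorm μ L hL
end

section
/- Let S be a nonempty countable set and let Q be a bounded self-adjoint linear operator on the real Hilbert space ℓ²(S) whose matrix entries are nonnegative, i.e. ⟨δ_x, Q δ_y⟩ ≥ 0 for all x, y ∈ S. Assume that for all x, y ∈ S the entries ⟨δ_x, Qⁿ δ_y⟩ are strictly positive for all sufficiently large n and that lim_{n→∞} (1/n) · log ⟨δ_x, Qⁿ δ_y⟩ = 0. Then sup{⟨ν, Q ν⟩ : ν ∈ ℓ²(S), ‖ν‖ = 1} = 1; that is, the top of the spectrum of Q equals 1. -/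
/-!
Because the matrix entries of `Q` are nonnegative, `|⟪ν, Q ν⟫| ≤ ⟪|ν|, Q |ν|⟫` with
`‖|ν|‖ = ‖ν‖`; as `Q` is self-adjoint, `‖Q‖` is the supremum of `|⟪ν, Q ν⟫|` over unit vectors,
so any bound for the quadratic form on nonnegative finitely supported unit vectors bounds `‖Q‖`.
For such a vector `g`, iterating Cauchy–Schwarz gives `⟪g, Q g⟫ ^ 2 ^ m ≤ ⟪g, Q ^ 2 ^ m g⟫`,
which grows subexponentially by the hypothesis on the entries; hence `‖Q‖ ≤ 1`. The supremum
`λ` of the quadratic form bounds `‖Q‖` in the same way, and `e ^ (-ε n) ≤ ⟪δ_x, Qⁿ δ_x⟫ ≤ ‖Q‖ ⁿ`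
gives `1 ≤ ‖Q‖ = λ`.
-/

open Filter Topology
open scoped InnerProductSpace lp

section

variable {ι E : Type*} [NormedAddCommGroup E] [InnerProductSpace ℝ E]

section FiniteCombination

variable (A : E →L[ℝ] E) {v : ι → E} (s : Finset ι)

theorem inner_sum_smul_map_sum_smul (c d : ι → ℝ) :
    ⟪∑ i ∈ s, c i • v i, A (∑ j ∈ s, d j • v j)⟫_ℝ
      = ∑ i ∈ s, ∑ j ∈ s, c i * d j * ⟪v i, A (v j)⟫_ℝ := by
  simp only [map_sum, map_smul, sum_inner, inner_sum, real_inner_smul_left,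
    real_inner_smul_right, mul_assoc]
  rw [Finset.sum_comm]
  simp only [mul_left_comm]

theorem abs_inner_sum_smul_map_le (hA : ∀ i j, 0 ≤ ⟪v i, A (v j)⟫_ℝ) (c : ι → ℝ) :
    |⟪∑ i ∈ s, c i • v i, A (∑ i ∈ s, c i • v i)⟫_ℝ|
      ≤ ⟪∑ i ∈ s, |c i| • v i, A (∑ i ∈ s, |c i| • v i)⟫_ℝ := by
  rw [inner_sum_smul_map_sum_smul, inner_sum_smul_map_sum_smul]
  refine (Finset.abs_sum_le_sum_abs _ _).trans <| Finset.sum_le_sum fun i _ =>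
    (Finset.abs_sum_le_sum_abs _ _).trans <| Finset.sum_le_sum fun j _ => ?_
  rw [abs_mul, abs_mul, abs_of_nonneg (hA i j)]

theorem Orthonormal.norm_sum_abs_smul (hv : Orthonormal ℝ v) (c : ι → ℝ) :
    ‖∑ i ∈ s, |c i| • v i‖ = ‖∑ i ∈ s, c i • v i‖ := by
  rw [← sq_eq_sq₀ (norm_nonneg _) (norm_nonneg _), ← real_inner_self_eq_norm_sq,
    ← real_inner_self_eq_norm_sq, hv.inner_sum, hv.inner_sum]
  simp

end FiniteCombination

theorem HilbertBasis.le_of_forall_finset_sum {α : Type*} [TopologicalSpace α] [Preorder α]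
    [OrderClosedTopology α] (b : HilbertBasis ι ℝ E) {φ ψ : E → α} (hφ : Continuous φ)
    (hψ : Continuous ψ) (v : E)
    (h : ∀ s : Finset ι, φ (∑ i ∈ s, b.repr v i • b i) ≤ ψ (∑ i ∈ s, b.repr v i • b i)) :
    φ v ≤ ψ v :=
  le_of_tendsto_of_tendsto' ((hφ.tendsto v).comp (b.hasSum_repr v))
    ((hψ.tendsto v).comp (b.hasSum_repr v)) h

theorem LinearMap.IsSymmetric.inner_map_self_pow_two_pow_le {A : E →L[ℝ] E}
    (hA : (A : E →ₗ[ℝ] E).IsSymmetric) {g : E} (hg : ‖g‖ = 1) (h0 : 0 ≤ ⟪g, A g⟫_ℝ) (m : ℕ) :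
    ⟪g, A g⟫_ℝ ^ 2 ^ m ≤ ⟪g, (A ^ 2 ^ m) g⟫_ℝ := by
  induction m with
  | zero => simp
  | succ m ih =>
    have hsq : ⟪g, (A ^ 2 ^ (m + 1)) g⟫_ℝ = ‖(A ^ 2 ^ m) g‖ ^ 2 := by
      have hAm := hA.pow (2 ^ m)
      rw [← ContinuousLinearMap.toLinearMap_pow] at hAm
      rw [pow_succ, pow_mul, sq, mul_apply_eq_comp, ← real_inner_self_eq_norm_sq]
      exact (hAm g _).symm
    calc ⟪g, A g⟫_ℝ ^ 2 ^ (m + 1) = (⟪g, A g⟫_ℝ ^ 2 ^ m) ^ 2 := by rw [pow_succ, pow_mul]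
      _ ≤ ⟪g, (A ^ 2 ^ m) g⟫_ℝ ^ 2 := by gcongr
      _ ≤ (‖g‖ * ‖(A ^ 2 ^ m) g‖) ^ 2 := by
        rw [← sq_abs]; gcongr; exact abs_real_inner_le_norm _ _
      _ = ⟪g, (A ^ 2 ^ (m + 1)) g⟫_ℝ := by rw [hsq, hg, one_mul]

theorem real_inner_map_self_le_mul_norm_sq {A : E →L[ℝ] E} {C : ℝ} (g : E)
    (h : g ≠ 0 → ⟪‖g‖⁻¹ • g, A (‖g‖⁻¹ • g)⟫_ℝ ≤ C) : ⟪g, A g⟫_ℝ ≤ C * ‖g‖ ^ 2 := by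
  rcases eq_or_ne g 0 with rfl | hg
  · simp
  have h := h hg
  rwa [map_smul, real_inner_smul_left, real_inner_smul_right, ← mul_assoc, ← sq, inv_pow,
    inv_mul_le_iff₀ (by positivity), mul_comm] at h

namespace HilbertBasis

variable (b : HilbertBasis ι ℝ E) (A : E →L[ℝ] E)

theorem abs_inner_map_self_le_of_nonneg (hA : ∀ i j, 0 ≤ ⟪b i, A (b j)⟫_ℝ) {C : ℝ}
    (hC : ∀ (s : Finset ι) (c : ι → ℝ), (∀ i, 0 ≤ c i) → ‖∑ i ∈ s, c i • b i‖ = 1 →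
      ⟪∑ i ∈ s, c i • b i, A (∑ i ∈ s, c i • b i)⟫_ℝ ≤ C) (v : E) :
    |⟪v, A v⟫_ℝ| ≤ C * ‖v‖ ^ 2 := by
  refine b.le_of_forall_finset_sum (φ := fun v => |⟪v, A v⟫_ℝ|) (ψ := fun v => C * ‖v‖ ^ 2)
    (by fun_prop) (by fun_prop) v fun s => ?_
  set c := b.repr v
  set g := ∑ i ∈ s, |c i| • b i
  calc |⟪∑ i ∈ s, c i • b i, A (∑ i ∈ s, c i • b i)⟫_ℝ|
      ≤ ⟪g, A g⟫_ℝ := abs_inner_sum_smul_map_le A s hA _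
    _ ≤ C * ‖g‖ ^ 2 := by
      refine real_inner_map_self_le_mul_norm_sq g fun hg => ?_
      have hunit : ‖g‖⁻¹ • g = ∑ i ∈ s, (‖g‖⁻¹ * |c i|) • b i := by
        simp only [g, Finset.smul_sum, smul_smul]
      rw [hunit]
      refine hC s _ (fun i => by positivity) ?_
      rw [← hunit, norm_smul, norm_inv, norm_norm, inv_mul_cancel₀ (norm_ne_zero_iff.2 hg)]
    _ = C * ‖∑ i ∈ s, c i • b i‖ ^ 2 := by rw [b.orthonormal.norm_sum_abs_smul]

theorem opNorm_le_of_nonneg (hA_symm : (A : E →ₗ[ℝ] E).IsSymmetric)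
    (hA : ∀ i j, 0 ≤ ⟪b i, A (b j)⟫_ℝ) {C : ℝ} (hC0 : 0 ≤ C)
    (hC : ∀ (s : Finset ι) (c : ι → ℝ), (∀ i, 0 ≤ c i) → ‖∑ i ∈ s, c i • b i‖ = 1 →
      ⟪∑ i ∈ s, c i • b i, A (∑ i ∈ s, c i • b i)⟫_ℝ ≤ C) :
    ‖A‖ ≤ C := by
  rw [A.norm_eq_iSup_rayleighQuotient hA_symm]
  refine ciSup_le fun v => ?_
  rcases eq_or_ne v 0 with rfl | hv
  · simpa using hC0
  rw [ContinuousLinearMap.rayleighQuotient, ContinuousLinearMap.reApplyInnerSelf_apply, abs_div,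
    abs_sq, div_le_iff₀ (by positivity), real_inner_comm]
  exact b.abs_inner_map_self_le_of_nonneg A hA hC v

end HilbertBasis

section Growth

variable {a : ℕ → ℝ}

theorem eventually_le_pow_of_tendsto_log_div (hpos : ∀ᶠ n in atTop, 0 < a n)
    (h : Tendsto (fun n : ℕ => 1 / (n : ℝ) * Real.log (a n)) atTop (𝓝 0)) {r : ℝ} (hr : 1 < r) :
    ∀ᶠ n in atTop, a n ≤ r ^ n := by
  filter_upwards [h.eventually (gt_mem_nhds (Real.log_pos hr)), hpos, eventually_gt_atTop 0]
    with n hlog ha hn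
  rw [one_div_mul_eq_div, div_lt_iff₀ (by positivity), mul_comm, ← Real.log_pow] at hlog
  exact ((Real.log_lt_log_iff ha (by positivity)).1 hlog).le

theorem eventually_pow_le_of_tendsto_log_div (hpos : ∀ᶠ n in atTop, 0 < a n)
    (h : Tendsto (fun n : ℕ => 1 / (n : ℝ) * Real.log (a n)) atTop (𝓝 0))
    {r : ℝ} (hr0 : 0 < r) (hr : r < 1) :
    ∀ᶠ n in atTop, r ^ n ≤ a n := by
  filter_upwards [h.eventually (lt_mem_nhds (Real.log_neg hr0 hr)), hpos, eventually_gt_atTop 0]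
    with n hlog ha hn
  rw [one_div_mul_eq_div, lt_div_iff₀ (by positivity), mul_comm, ← Real.log_pow] at hlog
  exact ((Real.log_lt_log_iff (by positivity) ha).1 hlog).le

end Growth

theorem le_of_frequently_pow_le_mul_pow {a b K : ℝ} (hb : 0 < b)
    (h : ∃ᶠ n in atTop, a ^ n ≤ K * b ^ n) : a ≤ b := by
  by_contra! hab
  have hgrow : Tendsto (fun n : ℕ => (a / b) ^ n) atTop atTop :=
    tendsto_pow_atTop_atTop_of_one_lt ((one_lt_div hb).2 hab)
  obtain ⟨n, hn, hK⟩ := (h.and_eventually (hgrow.eventually_gt_atTop K)).exists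
  rw [div_pow, lt_div_iff₀ (by positivity)] at hK
  linarith

theorem LinearMap.IsSymmetric.inner_sum_smul_map_le_one {A : E →L[ℝ] E}
    (hA_symm : (A : E →ₗ[ℝ] E).IsSymmetric) {v : ι → E} (hA : ∀ i j, 0 ≤ ⟪v i, A (v j)⟫_ℝ)
    (hgrowth : ∀ i j, ∀ r > 1, ∀ᶠ n in atTop, ⟪v i, (A ^ n) (v j)⟫_ℝ ≤ r ^ n)
    (s : Finset ι) {c : ι → ℝ} (hc : ∀ i, 0 ≤ c i) (hg : ‖∑ i ∈ s, c i • v i‖ = 1) :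
    ⟪∑ i ∈ s, c i • v i, A (∑ i ∈ s, c i • v i)⟫_ℝ ≤ 1 := by
  set g := ∑ i ∈ s, c i • v i
  have hd : 0 ≤ ⟪g, A g⟫_ℝ := by
    rw [inner_sum_smul_map_sum_smul]
    exact Finset.sum_nonneg fun i _ => Finset.sum_nonneg fun j _ =>
      mul_nonneg (mul_nonneg (hc i) (hc j)) (hA i j)
  refine le_of_forall_gt_imp_ge_of_dense fun r hr => le_of_frequently_pow_le_mul_pow
    (K := ∑ i ∈ s, ∑ j ∈ s, c i * c j) (by positivity) ?_
  have hentries : ∀ᶠ n in atTop, ∀ i ∈ s, ∀ j ∈ s, ⟪v i, (A ^ n) (v j)⟫_ℝ ≤ r ^ n := by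
    simp only [eventually_all_finset]
    exact fun i _ j _ => hgrowth i j r hr
  have hquad : ∀ᶠ n in atTop, ⟪g, (A ^ n) g⟫_ℝ ≤ (∑ i ∈ s, ∑ j ∈ s, c i * c j) * r ^ n := by
    filter_upwards [hentries] with n hn
    simp only [g, inner_sum_smul_map_sum_smul, Finset.sum_mul]
    gcongr with i hi j hj
    · exact mul_nonneg (hc i) (hc j)
    · exact hn i hi j hj
  have htwo : Tendsto (fun m : ℕ => 2 ^ m) atTop atTop :=
    tendsto_pow_atTop_atTop_of_one_lt one_lt_two
  refine htwo.frequently (Eventually.frequently ?_)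
  filter_upwards [htwo.eventually hquad] with m hm
  exact (hA_symm.inner_map_self_pow_two_pow_le hg hd m).trans hm

theorem ContinuousLinearMap.one_le_opNorm_of_eventually_pow_le (A : E →L[ℝ] E) {u : E}
    (hu : ‖u‖ = 1) (h : ∀ r, 0 < r → r < 1 → ∀ᶠ n in atTop, r ^ n ≤ ⟪u, (A ^ n) u⟫_ℝ) :
    1 ≤ ‖A‖ := by
  refine le_of_forall_lt_imp_le_of_dense fun r hr => ?_
  rcases le_or_gt r 0 with hr0 | hr0
  · exact hr0.trans (norm_nonneg A)
  obtain ⟨n, hrn, hn⟩ := (h r hr0 hr |>.and (eventually_gt_atTop 0)).exists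
  refine le_of_pow_le_pow_left₀ hn.ne' (norm_nonneg A) ?_
  calc r ^ n ≤ ⟪u, (A ^ n) u⟫_ℝ := hrn
    _ ≤ ‖u‖ * ‖(A ^ n) u‖ := real_inner_le_norm _ _
    _ ≤ ‖A ^ n‖ := by simpa [hu] using (A ^ n).le_opNorm u
    _ ≤ ‖A‖ ^ n := norm_pow_le' A hn

end

theorem top_of_spectrum_eq_one_general {S : Type*} [Nonempty S] [DecidableEq S]
    (Q : lp (fun _ : S => ℝ) 2 →L[ℝ] lp (fun _ : S => ℝ) 2)
    (hQ_sa : ∀ μ ν : lp (fun _ : S => ℝ) 2, (inner ℝ (Q μ) ν : ℝ) = inner ℝ μ (Q ν))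
    (h_nonneg : ∀ x y : S,
      0 ≤ (inner ℝ (lp.single 2 x (1 : ℝ)) (Q (lp.single 2 y (1 : ℝ))) : ℝ))
    (h_pos : ∀ x y : S, ∀ᶠ n : ℕ in atTop,
      0 < (inner ℝ (lp.single 2 x (1 : ℝ)) ((Q ^ n) (lp.single 2 y (1 : ℝ))) : ℝ))
    (h_growth : ∀ x y : S,
      Tendsto (fun n : ℕ =>
          (1 / (n : ℝ)) *
            Real.log (inner ℝ (lp.single 2 x (1 : ℝ)) ((Q ^ n) (lp.single 2 y (1 : ℝ))) : ℝ))
        atTop (nhds 0)) :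
    sSup {r : ℝ | ∃ ν : lp (fun _ : S => ℝ) 2, ‖ν‖ = 1 ∧ (inner ℝ ν (Q ν) : ℝ) = r} = 1 := by
  let b : HilbertBasis S ℝ ℓ²(S, ℝ) := default
  have hb (x : S) : b x = lp.single 2 x 1 := by rw [← b.repr_symm_single]; rfl
  have hQ_symm : (Q : ℓ²(S, ℝ) →ₗ[ℝ] ℓ²(S, ℝ)).IsSymmetric := hQ_sa
  simp only [← hb] at h_nonneg h_pos h_growth
  obtain ⟨x₀⟩ := ‹Nonempty S›
  have hx₀ : ‖b x₀‖ = 1 := b.orthonormal.1 x₀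
  have hQ_le_one : ‖Q‖ ≤ 1 := b.opNorm_le_of_nonneg Q hQ_symm h_nonneg zero_le_one
    fun s _ hc hu => hQ_symm.inner_sum_smul_map_le_one h_nonneg
      (fun x y _ hr => eventually_le_pow_of_tendsto_log_div (h_pos x y) (h_growth x y) hr) s hc hu
  have hone_le : 1 ≤ ‖Q‖ := Q.one_le_opNorm_of_eventually_pow_le hx₀ fun r hr0 hr =>
    eventually_pow_le_of_tendsto_log_div (h_pos x₀ x₀) (h_growth x₀ x₀) hr0 hr
  have hle_norm {ν : ℓ²(S, ℝ)} (hν : ‖ν‖ = 1) : ⟪ν, Q ν⟫_ℝ ≤ ‖Q‖ := by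
    calc ⟪ν, Q ν⟫_ℝ ≤ ‖ν‖ * ‖Q ν‖ := real_inner_le_norm _ _
      _ ≤ ‖Q‖ := by simpa [hν] using Q.le_opNorm ν
  set T := {r : ℝ | ∃ ν : ℓ²(S, ℝ), ‖ν‖ = 1 ∧ ⟪ν, Q ν⟫_ℝ = r}
  have hbdd : BddAbove T := ⟨‖Q‖, by rintro _ ⟨ν, hν, rfl⟩; exact hle_norm hν⟩
  have hsup_le : sSup T ≤ ‖Q‖ :=
    csSup_le ⟨_, b x₀, hx₀, rfl⟩ (by rintro _ ⟨ν, hν, rfl⟩; exact hle_norm hν)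
  have hle_sup : ‖Q‖ ≤ sSup T :=
    b.opNorm_le_of_nonneg Q hQ_symm h_nonneg
      ((h_nonneg x₀ x₀).trans (le_csSup hbdd ⟨_, hx₀, rfl⟩)) fun _ _ _ hu =>
      le_csSup hbdd ⟨_, hu, rfl⟩
  linarith

/-- Let `Q` be a bounded self-adjoint operator on `ℓ²(S)` (`S` nonempty countable)
with nonnegative matrix entries, whose entries `⟨δ_x, Qⁿ δ_y⟩` are eventually
strictly positive and satisfy `(1/n) log ⟨δ_x, Qⁿ δ_y⟩ → 0`. Then the top of the
spectrum of `Q`, i.e. `sup {⟨ν, Qν⟩ : ‖ν‖ = 1}`, equals `1`. -/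
theorem top_of_spectrum_eq_one {S : Type*} [Countable S] [Nonempty S] [DecidableEq S]
    (Q : lp (fun _ : S => ℝ) 2 →L[ℝ] lp (fun _ : S => ℝ) 2)
    (hQ_sa : ∀ μ ν : lp (fun _ : S => ℝ) 2, (inner ℝ (Q μ) ν : ℝ) = inner ℝ μ (Q ν))
    (h_nonneg : ∀ x y : S,
      0 ≤ (inner ℝ (lp.single 2 x (1 : ℝ)) (Q (lp.single 2 y (1 : ℝ))) : ℝ))
    (h_pos : ∀ x y : S, ∀ᶠ n : ℕ in atTop,
      0 < (inner ℝ (lp.single 2 x (1 : ℝ)) ((Q ^ n) (lp.single 2 y (1 : ℝ))) : ℝ))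
    (h_growth : ∀ x y : S,
      Tendsto (fun n : ℕ =>
          (1 / (n : ℝ)) *
            Real.log (inner ℝ (lp.single 2 x (1 : ℝ)) ((Q ^ n) (lp.single 2 y (1 : ℝ))) : ℝ))
        atTop (nhds 0)) :
    sSup {r : ℝ | ∃ ν : lp (fun _ : S => ℝ) 2, ‖ν‖ = 1 ∧ (inner ℝ ν (Q ν) : ℝ) = r} = 1 :=
  top_of_spectrum_eq_one_general Q hQ_sa h_nonneg h_pos h_growth
end

section
/- Let b : ℕ → ℝ satisfy: b(m) > 0 for all m ≥ 2; b is nonincreasing on {m : m ≥ 2}; sup_{m≥2} (m−1)·b(m) < ∞; and for all integers m₁ ≥ 2 and n ≥ 1, (n·m₁ − 1)·b(n·m₁) ≥ (m₁ − 1)·b(m₁). Then the limit lim_{m→∞} (m−1)·b(m) exists and equals sup_{m≥2} (m−1)·b(m). -/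
open Filter Topology

/-!
Write `f m = (m - 1) b m` and `S = sup_{m ≥ 2} f m`. For `m, m₁ ≥ 2` let `k` be the first multiple
of `m₁` above `m`, so `m < k ≤ m + m₁`. The hypothesis along multiples and monotonicity give
`f m₁ ≤ f k ≤ (m + m₁ - 1) b k ≤ (m + m₁ - 1) b m`, i.e. `f m ≥ f m₁ - m₁ b m`.
Since `b m ≤ S / (m - 1) → 0`, the liminf of `f` is at least every `f m₁`, hence at least `S ≥ f`.
-/

theorem tendsto_zero_of_sub_one_mul_le {b : ℕ → ℝ} {C : ℝ} (hnonneg : ∀ m : ℕ, 2 ≤ m → 0 ≤ b m)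
    (hle : ∀ m : ℕ, 2 ≤ m → ((m : ℝ) - 1) * b m ≤ C) :
    Tendsto b atTop (𝓝 0) := by
  have hden : Tendsto (fun m : ℕ => (m : ℝ) - 1) atTop atTop :=
    tendsto_atTop_add_const_right _ _ tendsto_natCast_atTop_atTop
  have hbound : Tendsto (fun m : ℕ => C / ((m : ℝ) - 1)) atTop (𝓝 0) :=
    tendsto_const_nhds.div_atTop hden
  refine tendsto_of_tendsto_of_tendsto_of_le_of_le' tendsto_const_nhds hbound ?_ ?_
  · filter_upwards [eventually_ge_atTop 2] with m hm using hnonneg m hm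
  · filter_upwards [eventually_ge_atTop 2] with m hm
    have hm' : (0 : ℝ) < (m : ℝ) - 1 := by
      have : (2 : ℝ) ≤ m := by exact_mod_cast hm
      linarith
    rw [le_div_iff₀ hm', mul_comm]
    exact hle m hm

theorem sub_one_mul_le_add_sub_one_mul {b : ℕ → ℝ} (hnonneg : ∀ m : ℕ, 2 ≤ m → 0 ≤ b m)
    (hmono : ∀ m m' : ℕ, 2 ≤ m → m ≤ m' → b m' ≤ b m)
    (hsub : ∀ m₁ : ℕ, 2 ≤ m₁ → ∀ n : ℕ, 1 ≤ n →
      ((m₁ : ℝ) - 1) * b m₁ ≤ (((n * m₁ : ℕ) : ℝ) - 1) * b (n * m₁))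
    {m₁ m : ℕ} (hm₁ : 2 ≤ m₁) (hm : 2 ≤ m) :
    ((m₁ : ℝ) - 1) * b m₁ ≤ ((m : ℝ) + m₁ - 1) * b m := by
  set k := (m / m₁ + 1) * m₁ with hk
  have hmk : m < k := by
    rw [hk, add_one_mul]
    exact Nat.lt_div_mul_add (by omega)
  have hkm : k ≤ m + m₁ := by
    rw [hk, add_one_mul]
    exact Nat.add_le_add_right (Nat.div_mul_le_self m m₁) m₁
  have hkm' : (k : ℝ) ≤ m + m₁ := by exact_mod_cast hkm
  calc ((m₁ : ℝ) - 1) * b m₁ ≤ ((k : ℝ) - 1) * b k := hsub m₁ hm₁ _ (Nat.le_add_left 1 _)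
    _ ≤ ((m : ℝ) + m₁ - 1) * b k := by
      gcongr
      exact hnonneg k (by omega)
    _ ≤ ((m : ℝ) + m₁ - 1) * b m := by
      have : (2 : ℝ) ≤ m := by exact_mod_cast hm
      gcongr
      · linarith [(Nat.cast_nonneg m₁ : (0 : ℝ) ≤ m₁)]
      · exact hmono m k hm hmk.le

/-- If `b(m) > 0` for `m ≥ 2`, `b` is nonincreasing on `{m ≥ 2}`,
`sup_{m≥2} (m−1)b(m) < ∞`, and `(n m₁ − 1) b(n m₁) ≥ (m₁ − 1) b(m₁)` for all
`m₁ ≥ 2`, `n ≥ 1`, then `lim_{m→∞} (m−1) b(m)` exists and equals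
`sup_{m≥2} (m−1) b(m)`. -/
theorem limit_eq_sup_of_subadditive (b : ℕ → ℝ)
    (hpos : ∀ m : ℕ, 2 ≤ m → 0 < b m)
    (hmono : ∀ m m' : ℕ, 2 ≤ m → m ≤ m' → b m' ≤ b m)
    (hbdd : BddAbove {x : ℝ | ∃ m : ℕ, 2 ≤ m ∧ x = ((m : ℝ) - 1) * b m})
    (hsub : ∀ m₁ : ℕ, 2 ≤ m₁ → ∀ n : ℕ, 1 ≤ n →
      ((m₁ : ℝ) - 1) * b m₁ ≤ (((n * m₁ : ℕ) : ℝ) - 1) * b (n * m₁)) :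
    Tendsto (fun m : ℕ => ((m : ℝ) - 1) * b m) atTop
      (nhds (sSup {x : ℝ | ∃ m : ℕ, 2 ≤ m ∧ x = ((m : ℝ) - 1) * b m})) := by
  set s := {x : ℝ | ∃ m : ℕ, 2 ≤ m ∧ x = ((m : ℝ) - 1) * b m}
  have hnonneg : ∀ m : ℕ, 2 ≤ m → 0 ≤ b m := fun m hm => (hpos m hm).le
  have hle_sup : ∀ m : ℕ, 2 ≤ m → ((m : ℝ) - 1) * b m ≤ sSup s :=
    fun m hm => le_csSup hbdd ⟨m, hm, rfl⟩
  have hb_zero : Tendsto b atTop (𝓝 0) := tendsto_zero_of_sub_one_mul_le hnonneg hle_sup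
  refine tendsto_order.2 ⟨fun a ha => ?_, fun a ha => ?_⟩
  · obtain ⟨_, ⟨m₁, hm₁, rfl⟩, ha_lt⟩ :=
      exists_lt_of_lt_csSup (⟨_, 2, le_rfl, rfl⟩ : s.Nonempty) ha
    have hlower : Tendsto (fun m => ((m₁ : ℝ) - 1) * b m₁ - m₁ * b m) atTop
        (𝓝 (((m₁ : ℝ) - 1) * b m₁)) := by
      simpa using tendsto_const_nhds.sub (hb_zero.const_mul (m₁ : ℝ))
    filter_upwards [hlower.eventually (eventually_gt_nhds ha_lt), eventually_ge_atTop 2]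
      with m ha_lt_m hm
    linarith [sub_one_mul_le_add_sub_one_mul hnonneg hmono hsub hm₁ hm]
  · filter_upwards [eventually_ge_atTop 2] with m hm using (hle_sup m hm).trans_lt ha
end

section
/- Let m ≥ 3 be an integer and let b : ℕ → ℝ satisfy: b(k) > 0 for 2 ≤ k ≤ m; b is nonincreasing on {2, …, m}; b(2) ≤ (k−1)·b(k) and (k−1)·b(k) < 2 for all 2 ≤ k ≤ m; and b(2) ≥ 2·(m−2)/(m−1). Then b is strictly decreasing on {2, …, m}, i.e. b(2) > b(3) > … > b(m). -/
/-! If `b(k) ≤ b(k+1)` for some `2 ≤ k < m`, the sandwich at `k` and at `k + 1` gives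
`b(2) ≤ (k-1) b(k+1) < 2(k-1)/k`. Since `x ↦ (x-1)/x` is increasing and `k ≤ m - 1`,
this contradicts `b(2) ≥ 2(m-2)/(m-1)`. -/

lemma mul_sub_one_div_le_mul_sub_one_div {a x y : ℝ} (ha : 0 ≤ a) (hx : 0 < x) (hxy : x ≤ y) :
    a * (x - 1) / x ≤ a * (y - 1) / y := by
  have hy : 0 < y := hx.trans_le hxy
  rw [mul_div_assoc, mul_div_assoc, sub_div, sub_div, div_self hx.ne', div_self hy.ne']
  gcongr

lemma lt_mul_sub_one_div_of_le_of_mul_lt {β c k a : ℝ} (hk : 1 < k)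
    (hle : β ≤ (k - 1) * c) (hlt : k * c < a) : β < a * (k - 1) / k := by
  calc β ≤ (k - 1) * c := hle
    _ = (k - 1) / k * (k * c) := by field_simp
    _ < (k - 1) / k * a := by gcongr
    _ = a * (k - 1) / k := by ring

theorem strict_decrease_of_sandwich_general (m : ℕ) (b : ℕ → ℝ)
    (hsandwich : ∀ k : ℕ, 2 ≤ k → k ≤ m →
      b 2 ≤ ((k : ℝ) - 1) * b k ∧ ((k : ℝ) - 1) * b k < 2)
    (hG : 2 * ((m : ℝ) - 2) / ((m : ℝ) - 1) ≤ b 2) :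
    ∀ k : ℕ, 2 ≤ k → k < m → b (k + 1) < b k := by
  intro k hk hkm
  by_contra! hle
  have hk' : (2 : ℝ) ≤ k := by exact_mod_cast hk
  have hkm' : (k : ℝ) ≤ m - 1 := by
    have : (k : ℝ) + 1 ≤ m := by exact_mod_cast hkm
    linarith
  have hb2 : b 2 ≤ ((k : ℝ) - 1) * b (k + 1) :=
    (hsandwich k hk hkm.le).1.trans (by gcongr; linarith)
  have hnext : (k : ℝ) * b (k + 1) < 2 := by
    simpa using (hsandwich (k + 1) (by omega) hkm).2
  have hupper := lt_mul_sub_one_div_of_le_of_mul_lt (by linarith) hb2 hnext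
  have hmono := mul_sub_one_div_le_mul_sub_one_div zero_le_two (by linarith) hkm'
  rw [sub_sub, one_add_one_eq_two] at hmono
  linarith

/-- If `b(k) > 0` and `b` is nonincreasing on `{2,…,m}`, with
`b(2) ≤ (k−1) b(k) < 2` for all `2 ≤ k ≤ m` and `b(2) ≥ 2(m−2)/(m−1)`,
then `b` is strictly decreasing on `{2,…,m}`. -/
theorem strict_decrease_of_sandwich (m : ℕ) (hm : 3 ≤ m) (b : ℕ → ℝ)
    (hpos : ∀ k : ℕ, 2 ≤ k → k ≤ m → 0 < b k)
    (hmono : ∀ k k' : ℕ, 2 ≤ k → k ≤ k' → k' ≤ m → b k' ≤ b k)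
    (hsandwich : ∀ k : ℕ, 2 ≤ k → k ≤ m →
      b 2 ≤ ((k : ℝ) - 1) * b k ∧ ((k : ℝ) - 1) * b k < 2)
    (hG : 2 * ((m : ℝ) - 2) / ((m : ℝ) - 1) ≤ b 2) :
    ∀ k : ℕ, 2 ≤ k → k < m → b (k + 1) < b k :=
  strict_decrease_of_sandwich_general m b hsandwich hG
end
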